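/- Let N ≥ 2 and take indices in ℤ/Nℤ. Define H_1(x,p) = (1/2) Σ_{k=1}^N p_k² + Σ_{k=1}^N e^{x_{k+1} − x_k} and H_2(x,p) = (1/3) Σ_{k=1}^N p_k³ + Σ_{k=1}^N e^{x_{k+1} − x_k}(p_{k+1} + p_k) on ℝ^N × ℝ^N. Then the canonical Poisson bracket of H_1 and H_2 vanishes identically: {H_1, H_2}(x,p) = 0 for all (x,p) ∈ ℝ^N × ℝ^N. -/

import Mathlib

noncomputable section

/-- Partial derivative `∂H/∂x_k` of a function `H(x,p)` on phase space. -/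
def pX {N : ℕ} [NeZero N] (H : (ZMod N → ℝ) → (ZMod N → ℝ) → ℝ)
    (x p : ZMod N → ℝ) (k : ZMod N) : ℝ :=
  fderiv ℝ (fun x' => H x' p) x (Pi.single k 1)

/-- Partial derivative `∂H/∂p_k` of a function `H(x,p)` on phase space. -/
def pP {N : ℕ} [NeZero N] (H : (ZMod N → ℝ) → (ZMod N → ℝ) → ℝ)
    (x p : ZMod N → ℝ) (k : ZMod N) : ℝ :=
  fderiv ℝ (fun p' => H x p') p (Pi.single k 1)

/-- The Toda Hamilton function `H₁(x,p) = ½ Σ p_k² + Σ e^{x_{k+1}−x_k}`. -/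
def H1 {N : ℕ} [NeZero N] (x p : ZMod N → ℝ) : ℝ :=
  (1 / 2) * ∑ k, (p k) ^ 2 + ∑ k, Real.exp (x (k + 1) - x k)

/-- The second Toda Hamilton function
`H₂(x,p) = ⅓ Σ p_k³ + Σ e^{x_{k+1}−x_k}(p_{k+1}+p_k)`. -/
def H2 {N : ℕ} [NeZero N] (x p : ZMod N → ℝ) : ℝ :=
  (1 / 3) * ∑ k, (p k) ^ 3 + ∑ k, Real.exp (x (k + 1) - x k) * (p (k + 1) + p k)

/-- The canonical Poisson bracket
`{F,G}(x,p) = Σ_k (∂F/∂x_k ∂G/∂p_k − ∂F/∂p_k ∂G/∂x_k)`. -/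
def poisson {N : ℕ} [NeZero N] (F G : (ZMod N → ℝ) → (ZMod N → ℝ) → ℝ)
    (x p : ZMod N → ℝ) : ℝ :=
  ∑ k, (pX F x p k * pP G x p k - pP F x p k * pX G x p k)

/-!
Writing `b_k = e^{x_{k+1} - x_k}`, the `k`-th term of the bracket `{H₁, H₂}` equals
`g_{k-1} - g_k` with `g_k = b_k² - b_k p_k p_{k+1}`, so its sum over the cycle `ℤ/Nℤ`
telescopes to zero.
-/

open Finset ContinuousLinearMap

lemma fderiv_sum_pow_single {ι : Type*} [Fintype ι] [DecidableEq ι] (n : ℕ) (p : ι → ℝ)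
    (k : ι) : fderiv ℝ (fun p' => ∑ j, p' j ^ n) p (Pi.single k 1) = n * p k ^ (n - 1) := by
  have hd : HasFDerivAt (fun p' => ∑ j, p' j ^ n)
      (∑ j, (n * p j ^ (n - 1)) • (proj j : (ι → ℝ) →L[ℝ] ℝ)) p :=
    HasFDerivAt.fun_sum fun j _ =>
      (hasDerivAt_pow n (p j)).comp_hasFDerivAt p (hasFDerivAt_apply j p)
  rw [hd.fderiv]
  simp [Pi.single_apply]

section CyclicSums

variable {G : Type*} [AddGroupWithOne G] [Fintype G]

lemma sum_sub_one_sub_eq_zero (g : G → ℝ) : ∑ k, (g (k - 1) - g k) = 0 := by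
  rw [sum_sub_distrib, ← (Equiv.subRight (1 : G)).sum_comp g]
  simp

lemma sum_ite_add_one_eq [DecidableEq G] (f : G → ℝ) (k : G) :
    ∑ j, (if j + 1 = k then f j else 0) = f (k - 1) := by
  simp_rw [← eq_sub_iff_add_eq]
  simp

end CyclicSums

namespace Toda

def bond {G : Type*} [AddGroupWithOne G] (x : G → ℝ) (j : G) : ℝ := Real.exp (x (j + 1) - x j)

variable {G : Type*} [AddGroupWithOne G] [Fintype G]

lemma hasFDerivAt_bond (x : G → ℝ) (j : G) :
    HasFDerivAt (bond · j) (bond x j • ((proj (j + 1) : (G → ℝ) →L[ℝ] ℝ) - proj j)) x :=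
  (Real.hasDerivAt_exp _).comp_hasFDerivAt x
    ((hasFDerivAt_apply _ x).sub (hasFDerivAt_apply _ x))

variable [DecidableEq G]

lemma fderiv_sum_bond_mul_single (c x : G → ℝ) (k : G) :
    fderiv ℝ (fun x' => ∑ j, bond x' j * c j) x (Pi.single k 1) =
      bond x (k - 1) * c (k - 1) - bond x k * c k := by
  have hd : HasFDerivAt (fun x' => ∑ j, bond x' j * c j)
      (∑ j, c j • bond x j • ((proj (j + 1) : (G → ℝ) →L[ℝ] ℝ) - proj j)) x :=
    HasFDerivAt.fun_sum fun j _ => (hasFDerivAt_bond x j).mul_const (c j)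
  rw [hd.fderiv]
  simp only [_root_.sum_apply, smul_apply, sub_apply, proj_apply, Pi.single_apply,
    smul_eq_mul, mul_sub, mul_ite, mul_one, mul_zero, sum_sub_distrib, sum_ite_add_one_eq,
    sum_ite_eq', mem_univ, if_true]
  ring

lemma fderiv_sum_mul_add_single (b p : G → ℝ) (k : G) :
    fderiv ℝ (fun p' => ∑ j, b j * (p' (j + 1) + p' j)) p (Pi.single k 1) =
      b (k - 1) + b k := by
  have hd : HasFDerivAt (fun p' => ∑ j, b j * (p' (j + 1) + p' j))
      (∑ j, b j • ((proj (j + 1) : (G → ℝ) →L[ℝ] ℝ) + proj j)) p :=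
    HasFDerivAt.fun_sum fun j _ =>
      ((hasFDerivAt_apply _ p).add (hasFDerivAt_apply j p)).const_mul (b j)
  rw [hd.fderiv]
  simp [sum_add_distrib, sum_ite_add_one_eq, Pi.single_apply]

end Toda

open Toda

section PartialDerivatives

variable {N : ℕ} [NeZero N] (x p : ZMod N → ℝ) (k : ZMod N)

lemma pX_H1 : pX H1 x p k = bond x (k - 1) - bond x k := by
  have h : (fun x' => H1 x' p) = fun x' => (1 / 2 * ∑ j, p j ^ 2) + ∑ j, bond x' j * 1 := by
    simp [H1, bond]
  rw [pX, h, fderiv_const_add, fderiv_sum_bond_mul_single, mul_one, mul_one]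

lemma pX_H2 :
    pX H2 x p k = bond x (k - 1) * (p k + p (k - 1)) - bond x k * (p (k + 1) + p k) := by
  have h : (fun x' => H2 x' p) =
      fun x' => (1 / 3 * ∑ j, p j ^ 3) + ∑ j, bond x' j * (p (j + 1) + p j) := by
    simp [H2, bond]
  rw [pX, h, fderiv_const_add, fderiv_sum_bond_mul_single, sub_add_cancel]

lemma pP_H1 : pP H1 x p k = p k := by
  have h : (fun p' => H1 x p') = fun p' => 1 / 2 * ∑ j, p' j ^ 2 + ∑ j, bond x j := rfl
  rw [pP, h, fderiv_add_const, fderiv_const_mul (by fun_prop), smul_apply,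
    fderiv_sum_pow_single]
  push_cast
  ring

lemma pP_H2 : pP H2 x p k = p k ^ 2 + bond x (k - 1) + bond x k := by
  have h : (fun p' => H2 x p') =
      fun p' => 1 / 3 * ∑ j, p' j ^ 3 + ∑ j, bond x j * (p' (j + 1) + p' j) := rfl
  rw [pP, h, fderiv_fun_add (by fun_prop) (by fun_prop), add_apply,
    fderiv_const_mul (by fun_prop), smul_apply, fderiv_sum_pow_single,
    fderiv_sum_mul_add_single]
  push_cast
  ring

end PartialDerivatives

theorem toda_hamiltonians_in_involution_general (N : ℕ) [NeZero N] :
    ∀ x p : ZMod N → ℝ, poisson H1 H2 x p = 0 := by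
  intro x p
  let g : ZMod N → ℝ := fun k => bond x k ^ 2 - bond x k * p k * p (k + 1)
  calc poisson H1 H2 x p = ∑ k, (g (k - 1) - g k) := by
        refine sum_congr rfl fun k _ => ?_
        simp only [g, pX_H1, pP_H1, pX_H2, pP_H2, sub_add_cancel]
        ring
    _ = 0 := sum_sub_one_sub_eq_zero g

/-- The Toda Hamilton functions `H₁` and `H₂` are in involution: their
canonical Poisson bracket vanishes identically. -/
theorem toda_hamiltonians_in_involution (N : ℕ) [NeZero N] (hN : 2 ≤ N) :
    ∀ x p : ZMod N → ℝ, poisson H1 H2 x p = 0 :=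
  toda_hamiltonians_in_involution_general N
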